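/- If D₁, D₁', D₂, D₂' are dimension types with D₁ ≤ D₁' and D₂ ≤ D₂', then D₁ ⊞ D₂ ≤ D₁' ⊞ D₂'. -/

import Mathlib

/-- The Bockstein index set σ: the symbol ℚ together with, for every prime `p`,
the symbols ℤ_p, ℤ_{p^∞} and ℤ_{(p)}. -/
inductive Bock : Type
  | Q : Bock
  | Zp (p : Nat.Primes) : Bock
  | ZpInf (p : Nat.Primes) : Bock
  | Zloc (p : Nat.Primes) : Bock

/-- `D` is `p`-regular: `D(ℤ_{(p)}) = D(ℤ_p) = D(ℤ_{p^∞}) = D(ℚ)`. -/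
def pRegular (D : Bock → ℕ) (p : Nat.Primes) : Prop :=
  D (.Zloc p) = D (.Zp p) ∧ D (.Zp p) = D (.ZpInf p) ∧ D (.ZpInf p) = D .Q

/-- `D` is `p⁺`-singular: `D(ℤ_{p^∞}) = D(ℤ_p)` and
`D(ℤ_{(p)}) = max (D(ℚ)) (D(ℤ_{p^∞}) + 1)`. -/
def pPlusSingular (D : Bock → ℕ) (p : Nat.Primes) : Prop :=
  D (.ZpInf p) = D (.Zp p) ∧ D (.Zloc p) = max (D .Q) (D (.ZpInf p) + 1)

/-- `D` is `p⁻`-singular: `D(ℤ_p) ≥ 1`, `D(ℤ_{p^∞}) = D(ℤ_p) - 1` and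
`D(ℤ_{(p)}) = max (D(ℚ)) (D(ℤ_{p^∞}) + 1)`. -/
def pMinusSingular (D : Bock → ℕ) (p : Nat.Primes) : Prop :=
  1 ≤ D (.Zp p) ∧ D (.ZpInf p) = D (.Zp p) - 1 ∧
    D (.Zloc p) = max (D .Q) (D (.ZpInf p) + 1)

instance (D : Bock → ℕ) (p : Nat.Primes) : Decidable (pRegular D p) := by
  unfold pRegular; infer_instance

instance (D : Bock → ℕ) (p : Nat.Primes) : Decidable (pPlusSingular D p) := by
  unfold pPlusSingular; infer_instance

instance (D : Bock → ℕ) (p : Nat.Primes) : Decidable (pMinusSingular D p) := by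
  unfold pMinusSingular; infer_instance

/-- A dimension type: for every prime `p`, `D` is `p`-regular, `p⁺`-singular
or `p⁻`-singular. -/
def DimensionType (D : Bock → ℕ) : Prop :=
  ∀ p : Nat.Primes, pRegular D p ∨ pPlusSingular D p ∨ pMinusSingular D p

/-- The `p`-singularity sign ε of `D`: `+1` if `p⁺`-singular, `-1` if
`p⁻`-singular, `0` otherwise (i.e. `p`-regular, for dimension types). -/
def bsign (D : Bock → ℕ) (p : Nat.Primes) : ℤ :=
  if pPlusSingular D p then 1 else if pMinusSingular D p then -1 else 0

/-- The product of signs: `ε⊗0 = 0⊗ε = ε`, `ε⊗ε = ε`, `+⊗− = −⊗+ = −`. -/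
def signMul (a b : ℤ) : ℤ :=
  if a = 0 then b else if b = 0 then a else if a = b then a else -1

/-- The operation `D₁ ⊞ D₂` suggested by the Bockstein product theorem. -/
def boxplus (D₁ D₂ : Bock → ℕ) : Bock → ℕ := fun G =>
  match G with
  | .Q => D₁ .Q + D₂ .Q
  | .Zp p => D₁ (.Zp p) + D₂ (.Zp p)
  | .ZpInf p =>
      let e := signMul (bsign D₁ p) (bsign D₂ p)
      let q := D₁ .Q + D₂ .Q
      let s := D₁ (.Zp p) + D₂ (.Zp p)
      if e = 0 then q else if e = 1 then s else s - 1
  | .Zloc p =>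
      let e := signMul (bsign D₁ p) (bsign D₂ p)
      let q := D₁ .Q + D₂ .Q
      let s := D₁ (.Zp p) + D₂ (.Zp p)
      if e = 0 then q else if e = 1 then max q (s + 1) else max q s

/-- The involution `D ↦ D*` exchanging the decorations `+` and `−`. -/
def dual (D : Bock → ℕ) : Bock → ℕ := fun G =>
  match G with
  | .Q => D .Q
  | .Zp p => D (.Zp p)
  | .ZpInf p =>
      if pPlusSingular D p then D (.Zp p) - 1
      else if pMinusSingular D p then D (.Zp p)
      else D (.ZpInf p)
  | .Zloc p =>
      if pPlusSingular D p then max (D .Q) (D (.Zp p))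
      else if pMinusSingular D p then max (D .Q) (D (.Zp p) + 1)
      else D (.Zloc p)

/-- The operation `D₁ ⊕ D₂ = (D₁* ⊞ D₂*)*`. -/
def oplus (D₁ D₂ : Bock → ℕ) : Bock → ℕ :=
  dual (boxplus (dual D₁) (dual D₂))

/-- The pointwise order on functions `σ → ℕ`. -/
def dle (D D' : Bock → ℕ) : Prop := ∀ G, D G ≤ D' G

/-- `dim D = n`: `D(G) ≤ n` for every `G ∈ σ` and `D(G) = n` for some `G ∈ σ`. -/
def dimEq (D : Bock → ℕ) (n : ℕ) : Prop :=
  (∀ G, D G ≤ n) ∧ ∃ G, D G = n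

/-
For a dimension type, `D(ℤ_{p^∞})` is `D(ℤ_p) - 1` at a `p⁻`-singular prime and `D(ℤ_p)` otherwise,
and `D(ℤ_{(p)}) > D(ℤ_{p^∞})` exactly at the singular primes. Hence
`(D₁ ⊞ D₂)(ℤ_{p^∞}) = max (D₁(ℤ_{p^∞}) + D₂(ℤ_{p^∞})) (D₁(ℤ_p) + D₂(ℤ_p) - 1)`, which is visibly monotone,
and `(D₁ ⊞ D₂)(ℤ_{(p)})` is `D₁(ℚ) + D₂(ℚ)` if both are `p`-regular and
`max (D₁(ℚ) + D₂(ℚ)) ((D₁ ⊞ D₂)(ℤ_{p^∞}) + 1)` otherwise. The only case where this is not plainly monotone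
is `D₁, D₂` not both regular below `D₁', D₂'` both regular; there the strict inequality
`D(ℤ_{p^∞}) < D(ℤ_{(p)})` at a singular prime pushes `(D₁ ⊞ D₂)(ℤ_{p^∞})` strictly below `D₁'(ℚ) + D₂'(ℚ)`.
-/

section LocalStructure

variable {D : Bock → ℕ} {p : Nat.Primes}

theorem pPlusSingular.not_pMinusSingular (h : pPlusSingular D p) : ¬ pMinusSingular D p := by
  rintro ⟨_, _, _⟩
  unfold pPlusSingular at h
  omega

theorem pRegular.not_pPlusSingular (h : pRegular D p) : ¬ pPlusSingular D p := by
  rintro ⟨_, _⟩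
  unfold pRegular at h
  omega

theorem pRegular.not_pMinusSingular (h : pRegular D p) : ¬ pMinusSingular D p := by
  rintro ⟨_, _, _⟩
  unfold pRegular at h
  omega

theorem bsign_of_pRegular (h : pRegular D p) : bsign D p = 0 := by
  simp [bsign, h.not_pPlusSingular, h.not_pMinusSingular]

theorem bsign_of_pPlusSingular (h : pPlusSingular D p) : bsign D p = 1 := by
  simp [bsign, h]

theorem bsign_of_pMinusSingular (h : pMinusSingular D p) : bsign D p = -1 := by
  have hplus : ¬ pPlusSingular D p := fun h' ↦ h'.not_pMinusSingular h
  simp [bsign, hplus, h]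

theorem bsign_eq_zero_iff (hD : DimensionType D) : bsign D p = 0 ↔ pRegular D p := by
  rcases hD p with h | h | h
  · simp [bsign_of_pRegular h, h]
  · simpa [bsign_of_pPlusSingular h] using fun h' : pRegular D p ↦ h'.not_pPlusSingular h
  · simpa [bsign_of_pMinusSingular h] using fun h' : pRegular D p ↦ h'.not_pMinusSingular h

theorem bsign_eq_neg_one_iff : bsign D p = -1 ↔ pMinusSingular D p := by
  by_cases hplus : pPlusSingular D p
  · simp [bsign_of_pPlusSingular hplus, hplus.not_pMinusSingular]
  · by_cases hminus : pMinusSingular D p <;> simp [bsign, hplus, hminus]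

theorem bsign_mem_Icc : bsign D p ∈ Set.Icc (-1) 1 := by
  unfold bsign
  split_ifs <;> simp

theorem pMinusSingular.ZpInf_add_one_eq_Zp (h : pMinusSingular D p) :
    D (.ZpInf p) + 1 = D (.Zp p) := by
  obtain ⟨_, _, _⟩ := h
  omega

theorem ZpInf_eq_Zp_of_not_pMinusSingular (hD : DimensionType D) (h : ¬ pMinusSingular D p) :
    D (.ZpInf p) = D (.Zp p) := by
  rcases hD p with ⟨_, _, _⟩ | ⟨_, _⟩ | h'
  · omega
  · omega
  · exact absurd h' h

theorem ZpInf_le_Zp (hD : DimensionType D) : D (.ZpInf p) ≤ D (.Zp p) := by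
  by_cases h : pMinusSingular D p
  · have := h.ZpInf_add_one_eq_Zp
    omega
  · exact (ZpInf_eq_Zp_of_not_pMinusSingular hD h).le

theorem ZpInf_lt_Zloc_of_not_pRegular (hD : DimensionType D) (h : ¬ pRegular D p) :
    D (.ZpInf p) < D (.Zloc p) := by
  rcases hD p with h' | ⟨_, _⟩ | ⟨_, _, _⟩
  · exact absurd h' h
  · omega
  · omega

theorem ZpInf_le_Zloc (hD : DimensionType D) : D (.ZpInf p) ≤ D (.Zloc p) := by
  by_cases h : pRegular D p
  · obtain ⟨_, _, _⟩ := h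
    omega
  · exact (ZpInf_lt_Zloc_of_not_pRegular hD h).le

end LocalStructure

theorem signMul_of_mem_Icc {a b : ℤ} (ha : a ∈ Set.Icc (-1) 1) (hb : b ∈ Set.Icc (-1) 1) :
    signMul a b = if a = -1 ∨ b = -1 then -1 else if a = 0 ∧ b = 0 then 0 else 1 := by
  obtain ⟨ha₀, ha₁⟩ := ha
  obtain ⟨hb₀, hb₁⟩ := hb
  unfold signMul
  grind

section Boxplus

variable {D₁ D₂ D₁' D₂' : Bock → ℕ} {p : Nat.Primes}

theorem signMul_bsign (h₁ : DimensionType D₁) (h₂ : DimensionType D₂) :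
    signMul (bsign D₁ p) (bsign D₂ p) =
      if pMinusSingular D₁ p ∨ pMinusSingular D₂ p then -1
      else if pRegular D₁ p ∧ pRegular D₂ p then 0 else 1 := by
  simp only [signMul_of_mem_Icc bsign_mem_Icc bsign_mem_Icc, bsign_eq_neg_one_iff,
    bsign_eq_zero_iff h₁, bsign_eq_zero_iff h₂]

theorem boxplus_ZpInf_eq_ite (h₁ : DimensionType D₁) (h₂ : DimensionType D₂) :
    boxplus D₁ D₂ (.ZpInf p) =
      if pMinusSingular D₁ p ∨ pMinusSingular D₂ p then D₁ (.Zp p) + D₂ (.Zp p) - 1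
      else if pRegular D₁ p ∧ pRegular D₂ p then D₁ .Q + D₂ .Q
      else D₁ (.Zp p) + D₂ (.Zp p) := by
  simp only [boxplus, signMul_bsign h₁ h₂]
  split_ifs <;> simp_all

theorem boxplus_Zloc_eq_ite (h₁ : DimensionType D₁) (h₂ : DimensionType D₂) :
    boxplus D₁ D₂ (.Zloc p) =
      if pMinusSingular D₁ p ∨ pMinusSingular D₂ p then max (D₁ .Q + D₂ .Q) (D₁ (.Zp p) + D₂ (.Zp p))
      else if pRegular D₁ p ∧ pRegular D₂ p then D₁ .Q + D₂ .Q
      else max (D₁ .Q + D₂ .Q) (D₁ (.Zp p) + D₂ (.Zp p) + 1) := by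
  simp only [boxplus, signMul_bsign h₁ h₂]
  split_ifs <;> simp_all

theorem boxplus_ZpInf (h₁ : DimensionType D₁) (h₂ : DimensionType D₂) :
    boxplus D₁ D₂ (.ZpInf p) =
      max (D₁ (.ZpInf p) + D₂ (.ZpInf p)) (D₁ (.Zp p) + D₂ (.Zp p) - 1) := by
  have hle₁ : D₁ (.ZpInf p) ≤ D₁ (.Zp p) := ZpInf_le_Zp h₁
  have hle₂ : D₂ (.ZpInf p) ≤ D₂ (.Zp p) := ZpInf_le_Zp h₂
  rw [boxplus_ZpInf_eq_ite h₁ h₂]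
  split_ifs with hminus hreg
  · rcases hminus with h | h <;> have := h.ZpInf_add_one_eq_Zp <;> omega
  · obtain ⟨⟨_, _, _⟩, ⟨_, _, _⟩⟩ := hreg
    omega
  · rw [not_or] at hminus
    rw [ZpInf_eq_Zp_of_not_pMinusSingular h₁ hminus.1, ZpInf_eq_Zp_of_not_pMinusSingular h₂ hminus.2]
    omega

theorem boxplus_Zloc_of_pRegular (h₁ : DimensionType D₁) (h₂ : DimensionType D₂)
    (hreg : pRegular D₁ p ∧ pRegular D₂ p) : boxplus D₁ D₂ (.Zloc p) = D₁ .Q + D₂ .Q := by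
  have hminus : ¬ (pMinusSingular D₁ p ∨ pMinusSingular D₂ p) := by
    rintro (h | h)
    exacts [hreg.1.not_pMinusSingular h, hreg.2.not_pMinusSingular h]
  rw [boxplus_Zloc_eq_ite h₁ h₂, if_neg hminus, if_pos hreg]

theorem boxplus_Zloc_of_not_pRegular (h₁ : DimensionType D₁) (h₂ : DimensionType D₂)
    (hreg : ¬ (pRegular D₁ p ∧ pRegular D₂ p)) :
    boxplus D₁ D₂ (.Zloc p) = max (D₁ .Q + D₂ .Q) (boxplus D₁ D₂ (.ZpInf p) + 1) := by
  rw [boxplus_Zloc_eq_ite h₁ h₂, boxplus_ZpInf_eq_ite h₁ h₂, if_neg hreg, if_neg hreg]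
  split_ifs with hminus
  · have : 1 ≤ D₁ (.Zp p) + D₂ (.Zp p) := by rcases hminus with ⟨_, _⟩ | ⟨_, _⟩ <;> omega
    rw [Nat.sub_add_cancel this]
  · rfl

theorem boxplus_Zloc_le (h₁ : DimensionType D₁) (h₂ : DimensionType D₂) :
    boxplus D₁ D₂ (.Zloc p) ≤ max (D₁ .Q + D₂ .Q) (boxplus D₁ D₂ (.ZpInf p) + 1) := by
  by_cases hreg : pRegular D₁ p ∧ pRegular D₂ p
  · exact (boxplus_Zloc_of_pRegular h₁ h₂ hreg).trans_le (le_max_left _ _)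
  · exact (boxplus_Zloc_of_not_pRegular h₁ h₂ hreg).le

theorem boxplus_ZpInf_mono (h₁ : DimensionType D₁) (h₁' : DimensionType D₁')
    (h₂ : DimensionType D₂) (h₂' : DimensionType D₂') (le₁ : dle D₁ D₁') (le₂ : dle D₂ D₂') :
    boxplus D₁ D₂ (.ZpInf p) ≤ boxplus D₁' D₂' (.ZpInf p) := by
  rw [boxplus_ZpInf h₁ h₂, boxplus_ZpInf h₁' h₂']
  gcongr <;> apply_assumption

theorem boxplus_ZpInf_lt_of_pRegular (h₁ : DimensionType D₁) (h₂ : DimensionType D₂)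
    (hreg : ¬ (pRegular D₁ p ∧ pRegular D₂ p)) (hreg' : pRegular D₁' p ∧ pRegular D₂' p)
    (le₁ : dle D₁ D₁') (le₂ : dle D₂ D₂') :
    boxplus D₁ D₂ (.ZpInf p) < D₁' .Q + D₂' .Q := by
  have hlt : D₁ (.ZpInf p) + D₂ (.ZpInf p) < D₁ (.Zloc p) + D₂ (.Zloc p) := by
    rcases not_and_or.1 hreg with h | h
    · exact add_lt_add_of_lt_of_le (ZpInf_lt_Zloc_of_not_pRegular h₁ h) (ZpInf_le_Zloc h₂)
    · exact add_lt_add_of_le_of_lt (ZpInf_le_Zloc h₁) (ZpInf_lt_Zloc_of_not_pRegular h₂ h)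
  obtain ⟨⟨_, _, _⟩, ⟨_, _, _⟩⟩ := hreg'
  have := le₁ (.Zloc p)
  have := le₂ (.Zloc p)
  have := le₁ (.Zp p)
  have := le₂ (.Zp p)
  rw [boxplus_ZpInf h₁ h₂]
  omega

theorem boxplus_Zloc_mono (h₁ : DimensionType D₁) (h₁' : DimensionType D₁')
    (h₂ : DimensionType D₂) (h₂' : DimensionType D₂') (le₁ : dle D₁ D₁') (le₂ : dle D₂ D₂') :
    boxplus D₁ D₂ (.Zloc p) ≤ boxplus D₁' D₂' (.Zloc p) := by
  have hQ : D₁ .Q + D₂ .Q ≤ D₁' .Q + D₂' .Q := add_le_add (le₁ .Q) (le₂ .Q)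
  by_cases hreg' : pRegular D₁' p ∧ pRegular D₂' p
  · rw [boxplus_Zloc_of_pRegular h₁' h₂' hreg']
    by_cases hreg : pRegular D₁ p ∧ pRegular D₂ p
    · rwa [boxplus_Zloc_of_pRegular h₁ h₂ hreg]
    · rw [boxplus_Zloc_of_not_pRegular h₁ h₂ hreg]
      exact max_le hQ (boxplus_ZpInf_lt_of_pRegular h₁ h₂ hreg hreg' le₁ le₂)
  · rw [boxplus_Zloc_of_not_pRegular h₁' h₂' hreg']
    exact (boxplus_Zloc_le h₁ h₂).trans <|
      max_le_max hQ (Nat.add_le_add_right (boxplus_ZpInf_mono h₁ h₁' h₂ h₂' le₁ le₂) 1)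

end Boxplus

/-- If D₁, D₁', D₂, D₂' are dimension types with D₁ ≤ D₁' and
D₂ ≤ D₂', then D₁ ⊞ D₂ ≤ D₁' ⊞ D₂'. -/
theorem boxplus_mono (D₁ D₁' D₂ D₂' : Bock → ℕ)
    (h₁ : DimensionType D₁) (h₁' : DimensionType D₁')
    (h₂ : DimensionType D₂) (h₂' : DimensionType D₂')
    (le₁ : dle D₁ D₁') (le₂ : dle D₂ D₂') :
    dle (boxplus D₁ D₂) (boxplus D₁' D₂') := by
  intro G
  cases G with
  | Q => exact add_le_add (le₁ .Q) (le₂ .Q)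
  | Zp p => exact add_le_add (le₁ (.Zp p)) (le₂ (.Zp p))
  | ZpInf p => exact boxplus_ZpInf_mono h₁ h₁' h₂ h₂' le₁ le₂
  | Zloc p => exact boxplus_Zloc_mono h₁ h₁' h₂ h₂' le₁ le₂
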